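/- arXiv:1812.11101 — 3 statements merged into one kernel-verified Lean document; each statement's English description precedes it below -/
import Mathlib

section
/- For all real h and all real z, the integral identity ∫_{−∞}^{h} φ(x) · φ(z) · [1 − e^{−(h−z)(h−x)}] dx = Φ(h)φ(z) − Φ(z)φ(h) holds. -/
/- Completing the square gives `φ(x) φ(z) e^{-(h-z)(h-x)} = φ(x + z - h) φ(h)`, so the integral splits
as `Φ(h) φ(z) - φ(h) ∫_{-∞}^h φ(x + z - h) dx`, and the last integral is `Φ(z)` after a translation. -/

open MeasureTheory ProbabilityTheory Real Set Filter

/-- The standard normal density `φ(x) = (2π)^{-1/2} exp(-x²/2)`. -/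
noncomputable def stdPhi (x : ℝ) : ℝ := (Real.sqrt (2 * Real.pi))⁻¹ * Real.exp (-x ^ 2 / 2)

/-- The standard normal distribution function `Φ(x) = ∫_{-∞}^x φ(t) dt`. -/
noncomputable def stdCdf (x : ℝ) : ℝ := ∫ t in Set.Iic x, stdPhi t

lemma integrable_stdPhi : Integrable stdPhi := by
  convert (integrable_exp_neg_mul_sq (by norm_num : (0 : ℝ) < 1 / 2)).const_mul
    (Real.sqrt (2 * Real.pi))⁻¹ using 2 with x
  rw [stdPhi]
  ring_nf

lemma stdPhi_mul_stdPhi_mul_exp (h x z : ℝ) :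
    stdPhi x * stdPhi z * Real.exp (-(h - z) * (h - x)) = stdPhi (x + (z - h)) * stdPhi h := by
  have hsq : -x ^ 2 / 2 + -z ^ 2 / 2 + -(h - z) * (h - x) = -(x + (z - h)) ^ 2 / 2 + -h ^ 2 / 2 := by
    ring
  simp only [stdPhi]
  calc _ = (Real.sqrt (2 * Real.pi))⁻¹ * (Real.sqrt (2 * Real.pi))⁻¹ *
        Real.exp (-x ^ 2 / 2 + -z ^ 2 / 2 + -(h - z) * (h - x)) := by
          rw [Real.exp_add, Real.exp_add]; ring
    _ = _ := by rw [hsq, Real.exp_add]; ring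

lemma setIntegral_Iic_comp_add_right {E : Type*} [NormedAddCommGroup E] [NormedSpace ℝ E]
    (f : ℝ → E) (b a : ℝ) :
    ∫ x in Iic b, f (x + a) = ∫ y in Iic (b + a), f y := by
  have := (measurePreserving_add_right volume a).setIntegral_preimage_emb
    (measurableEmbedding_addRight a) f (Iic (b + a))
  rwa [preimage_add_const_Iic, add_sub_cancel_right] at this

/-- The integral identity
`∫_{-∞}^h φ(x) φ(z) (1 - e^{-(h-z)(h-x)}) dx = Φ(h)φ(z) - Φ(z)φ(h)`. -/
theorem integral_p1_identity (h z : ℝ) :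
    ∫ x in Set.Iic h, stdPhi x * stdPhi z * (1 - Real.exp (-(h - z) * (h - x))) =
      stdCdf h * stdPhi z - stdCdf z * stdPhi h := by
  have hsplit : ∀ x, stdPhi x * stdPhi z * (1 - Real.exp (-(h - z) * (h - x))) =
      stdPhi x * stdPhi z - stdPhi (x + (z - h)) * stdPhi h := fun x => by
    rw [mul_sub, mul_one, stdPhi_mul_stdPhi_mul_exp]
  simp_rw [hsplit]
  rw [integral_sub (integrable_stdPhi.restrict.mul_const _)
      ((integrable_stdPhi.comp_add_right _).restrict.mul_const _),
    integral_mul_const, integral_mul_const, setIntegral_Iic_comp_add_right, add_sub_cancel]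
  rfl
end

section
/- As h → ∞, ∫_{−∞}^{h} Φ(y)² φ(2h − y) dy = (1/h + O(1/h²)) φ(h); that is, there exist constants C > 0 and h₀ such that for all h ≥ h₀, | ∫_{−∞}^{h} Φ(y)² φ(2h − y) dy − φ(h)/h | ≤ C φ(h)/h². -/
/-!
Put `y = h - t`. Since `φ(2h - y) = φ(h + t) = φ(h) e^{-ht} e^{-t²/2}`, the integral equals
`φ(h) ∫₀^∞ e^{-ht} Φ(h - t)² e^{-t²/2} dt`, while `φ(h)/h = φ(h) ∫₀^∞ e^{-ht} dt`. The defect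
`1 - Φ(h - t)² e^{-t²/2}` is at most `t²/2 + 2 (1 - Φ(h - t))`. Against `e^{-ht}`, the first term
is `O(h⁻² e^{-ht/2})`; so is the second, by Chebyshev's inequality `1 - Φ(h - t) ≤ 4/h²` when
`t ≤ h/2`, and because `e^{-ht/2} ≤ 4/h²` when `t > h/2`. Integrating gives an error `O(h⁻³)`.
-/

open MeasureTheory ProbabilityTheory Real Set Filter

lemma setIntegral_Iic_eq_setIntegral_Ioi_zero {E : Type*} [NormedAddCommGroup E]
    [NormedSpace ℝ E] (g : ℝ → E) (h : ℝ) :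
    ∫ y in Iic h, g y = ∫ t in Ioi 0, g (h - t) := by
  rw [← integral_Ici_eq_integral_Ioi, ← integral_indicator measurableSet_Iic,
    ← integral_indicator measurableSet_Ici, ← integral_sub_left_eq_self _ volume h]
  congr 1
  ext t
  simp [indicator]

lemma integral_exp_neg_mul_Ioi_zero {c : ℝ} (hc : 0 < c) :
    ∫ t in Ioi (0 : ℝ), exp (-c * t) = c⁻¹ := by
  rw [integral_exp_mul_Ioi (neg_neg_iff_pos.mpr hc)]
  simp

lemma sq_mul_exp_neg_le_two {u : ℝ} (hu : 0 ≤ u) : u ^ 2 * exp (-u) ≤ 2 := by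
  have := pow_div_factorial_le_exp u hu 2
  rw [exp_neg, ← div_eq_mul_inv, div_le_iff₀ (exp_pos u)]
  norm_num [Nat.factorial] at this
  linarith

lemma exp_neg_le_inv {u : ℝ} (hu : 0 < u) : exp (-u) ≤ u⁻¹ := by
  rw [exp_neg]
  exact inv_anti₀ hu ((le_add_of_nonneg_right zero_le_one).trans (add_one_le_exp u))

lemma exp_neg_sq_div_two_le_one (t : ℝ) : exp (-t ^ 2 / 2) ≤ 1 := by
  rw [exp_le_one_iff]; nlinarith [sq_nonneg t]

lemma one_sub_sq_mul_le {a e : ℝ} (ha₀ : 0 ≤ a) (ha₁ : a ≤ 1) (he : e ≤ 1) :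
    1 - a ^ 2 * e ≤ (1 - e) + 2 * (1 - a) := by
  have hea : e * (1 + a) ≤ 2 := by nlinarith
  nlinarith [mul_nonneg (sub_nonneg.mpr ha₁) (sub_nonneg.mpr hea)]

lemma stdPhi_eq_gaussianPDFReal : stdPhi = gaussianPDFReal 0 1 := by
  ext x; simp [stdPhi, gaussianPDFReal]

lemma stdPhi_add (h t : ℝ) :
    stdPhi (h + t) = stdPhi h * (exp (-h * t) * exp (-t ^ 2 / 2)) := by
  simp only [stdPhi, mul_assoc, ← exp_add]
  ring_nf

lemma stdCdf_eq_cdf_gaussianReal : stdCdf = cdf (gaussianReal 0 1) := by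
  ext x
  rw [cdf_eq_real, measureReal_def, gaussianReal_apply_eq_integral _ one_ne_zero,
    ENNReal.toReal_ofReal (setIntegral_nonneg measurableSet_Iic
      fun _ _ => gaussianPDFReal_nonneg _ _ _), stdCdf, stdPhi_eq_gaussianPDFReal]

lemma monotone_stdCdf : Monotone stdCdf := stdCdf_eq_cdf_gaussianReal ▸ monotone_cdf _

lemma stdCdf_nonneg (x : ℝ) : 0 ≤ stdCdf x := stdCdf_eq_cdf_gaussianReal ▸ cdf_nonneg _ x

lemma stdCdf_le_one (x : ℝ) : stdCdf x ≤ 1 := stdCdf_eq_cdf_gaussianReal ▸ cdf_le_one _ x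

lemma one_sub_stdCdf_le {x : ℝ} (hx : 0 < x) : 1 - stdCdf x ≤ 1 / x ^ 2 := by
  have hcheb := meas_ge_le_variance_div_sq (memLp_id_gaussianReal (μ := 0) (v := 1) 2) hx
  simp only [variance_id_gaussianReal, id, integral_id_gaussianReal, sub_zero, NNReal.coe_one]
    at hcheb
  rw [stdCdf_eq_cdf_gaussianReal, cdf_eq_real, ← probReal_compl_eq_one_sub measurableSet_Iic,
    compl_Iic, measureReal_def, ← ENNReal.toReal_ofReal (by positivity : (0:ℝ) ≤ 1 / x ^ 2)]
  refine ENNReal.toReal_mono ENNReal.ofReal_ne_top ((measure_mono fun ω hω => ?_).trans hcheb)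
  exact (le_of_lt hω).trans (le_abs_self ω)

section

variable {h t : ℝ}

lemma exp_neg_mul_mul_sq_le (hh : 0 < h) (ht : 0 ≤ t) :
    exp (-h * t) * t ^ 2 ≤ 8 / h ^ 2 * exp (-(h / 2) * t) := by
  have hpoly := sq_mul_exp_neg_le_two (by positivity : 0 ≤ h / 2 * t)
  have hsplit : exp (-h * t) = exp (-(h / 2) * t) * exp (-(h / 2 * t)) := by
    rw [← exp_add]; ring_nf
  rw [hsplit]
  calc exp (-(h / 2) * t) * exp (-(h / 2 * t)) * t ^ 2
      = 4 / h ^ 2 * ((h / 2 * t) ^ 2 * exp (-(h / 2 * t))) * exp (-(h / 2) * t) := by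
        field_simp; ring
    _ ≤ 4 / h ^ 2 * 2 * exp (-(h / 2) * t) := by gcongr
    _ = 8 / h ^ 2 * exp (-(h / 2) * t) := by ring

lemma exp_neg_mul_mul_one_sub_stdCdf_le (hh : 0 < h) (ht : 0 ≤ t) :
    exp (-h * t) * (1 - stdCdf (h - t)) ≤ 4 / h ^ 2 * exp (-(h / 2) * t) := by
  have hsplit : exp (-h * t) = exp (-(h / 2) * t) * exp (-(h / 2 * t)) := by
    rw [← exp_add]; ring_nf
  have htail : 0 ≤ 1 - stdCdf (h - t) := sub_nonneg.mpr (stdCdf_le_one _)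
  rcases le_or_gt t (h / 2) with hth | hth
  · have hdecay : exp (-h * t) ≤ exp (-(h / 2) * t) := exp_le_exp.mpr (by nlinarith)
    have hcdf : 1 - stdCdf (h - t) ≤ 4 / h ^ 2 := calc
      1 - stdCdf (h - t) ≤ 1 - stdCdf (h / 2) := by gcongr; exact monotone_stdCdf (by linarith)
      _ ≤ 1 / (h / 2) ^ 2 := one_sub_stdCdf_le (by positivity)
      _ = 4 / h ^ 2 := by ring
    calc exp (-h * t) * (1 - stdCdf (h - t)) ≤ exp (-(h / 2) * t) * (4 / h ^ 2) := by gcongr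
      _ = 4 / h ^ 2 * exp (-(h / 2) * t) := mul_comm _ _
  · have hdecay : exp (-(h / 2 * t)) ≤ 4 / h ^ 2 := calc
      exp (-(h / 2 * t)) ≤ (h / 2 * t)⁻¹ := exp_neg_le_inv (by nlinarith)
      _ ≤ (h ^ 2 / 4)⁻¹ := by gcongr; nlinarith
      _ = 4 / h ^ 2 := by rw [inv_div]
    calc exp (-h * t) * (1 - stdCdf (h - t)) ≤ exp (-h * t) * 1 := by
          gcongr; linarith [stdCdf_nonneg (h - t)]
      _ ≤ 4 / h ^ 2 * exp (-(h / 2) * t) := by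
          rw [mul_one, hsplit, mul_comm]; gcongr

lemma exp_neg_mul_mul_one_sub_stdCdf_sq_mem_Icc (hh : 0 < h) (ht : 0 ≤ t) :
    exp (-h * t) * (1 - stdCdf (h - t) ^ 2 * exp (-t ^ 2 / 2)) ∈
      Icc 0 (12 / h ^ 2 * exp (-(h / 2) * t)) := by
  have ha₀ := stdCdf_nonneg (h - t)
  have ha₁ := stdCdf_le_one (h - t)
  have he := exp_neg_sq_div_two_le_one t
  refine ⟨mul_nonneg (exp_pos _).le (sub_nonneg.mpr ?_), ?_⟩
  · nlinarith [pow_le_one₀ ha₀ ha₁ (n := 2), exp_pos (-t ^ 2 / 2)]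
  have hquad : 1 - exp (-t ^ 2 / 2) ≤ t ^ 2 / 2 := by linarith [add_one_le_exp (-t ^ 2 / 2)]
  calc exp (-h * t) * (1 - stdCdf (h - t) ^ 2 * exp (-t ^ 2 / 2))
      ≤ exp (-h * t) * (t ^ 2 / 2 + 2 * (1 - stdCdf (h - t))) := by
        gcongr; linarith [one_sub_sq_mul_le ha₀ ha₁ he]
    _ = (exp (-h * t) * t ^ 2) / 2 + 2 * (exp (-h * t) * (1 - stdCdf (h - t))) := by ring
    _ ≤ 8 / h ^ 2 * exp (-(h / 2) * t) / 2 + 2 * (4 / h ^ 2 * exp (-(h / 2) * t)) := by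
        gcongr ?_ / 2 + 2 * ?_
        · exact exp_neg_mul_mul_sq_le hh ht
        · exact exp_neg_mul_mul_one_sub_stdCdf_le hh ht
    _ = 12 / h ^ 2 * exp (-(h / 2) * t) := by ring

lemma abs_setIntegral_exp_neg_mul_mul_stdCdf_sq_sub_inv_le (hh : 0 < h) :
    |(∫ t in Ioi (0 : ℝ), exp (-h * t) * (stdCdf (h - t) ^ 2 * exp (-t ^ 2 / 2))) - h⁻¹|
      ≤ 24 / h ^ 3 := by
  have hexp : IntegrableOn (fun t => exp (-h * t)) (Ioi 0) := exp_neg_integrableOn_Ioi 0 hh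
  have hintegrand : IntegrableOn
      (fun t => exp (-h * t) * (stdCdf (h - t) ^ 2 * exp (-t ^ 2 / 2))) (Ioi 0) := by
    refine hexp.mul_bdd (c := 1) ?_ (ae_of_all _ fun t => ?_)
    · exact (((monotone_stdCdf.measurable.comp (measurable_const.sub measurable_id)).pow_const
        2).mul (by fun_prop)).aestronglyMeasurable
    · rw [norm_of_nonneg (by positivity)]
      exact mul_le_one₀ (pow_le_one₀ (stdCdf_nonneg _) (stdCdf_le_one _)) (exp_pos _).le
        (exp_neg_sq_div_two_le_one t)
  have hbound : IntegrableOn (fun t => 12 / h ^ 2 * exp (-(h / 2) * t)) (Ioi 0) :=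
    (exp_neg_integrableOn_Ioi 0 (half_pos hh)).const_mul _
  calc |(∫ t in Ioi (0 : ℝ), exp (-h * t) * (stdCdf (h - t) ^ 2 * exp (-t ^ 2 / 2))) - h⁻¹|
      = ‖∫ t in Ioi (0 : ℝ), exp (-h * t) * (1 - stdCdf (h - t) ^ 2 * exp (-t ^ 2 / 2))‖ := by
        simp_rw [mul_one_sub]
        rw [integral_sub hexp hintegrand, integral_exp_neg_mul_Ioi_zero hh, norm_eq_abs, abs_sub_comm]
    _ ≤ ∫ t in Ioi (0 : ℝ), 12 / h ^ 2 * exp (-(h / 2) * t) := by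
        refine norm_integral_le_of_norm_le hbound (ae_restrict_of_forall_mem measurableSet_Ioi
          fun t ht => ?_)
        obtain ⟨hlo, hhi⟩ := exp_neg_mul_mul_one_sub_stdCdf_sq_mem_Icc hh (le_of_lt ht)
        rwa [norm_of_nonneg hlo]
    _ = 24 / h ^ 3 := by
        rw [integral_const_mul, integral_exp_neg_mul_Ioi_zero (half_pos hh)]
        field_simp; ring

end

/-- As `h → ∞`, `∫_{-∞}^h Φ(y)² φ(2h - y) dy = (1/h + O(1/h²)) φ(h)`. -/
theorem integral_asymptotics :
    ∃ C > (0 : ℝ), ∃ h₀ : ℝ, ∀ h ≥ h₀,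
      |(∫ y in Set.Iic h, stdCdf y ^ 2 * stdPhi (2 * h - y)) - stdPhi h / h|
        ≤ C * stdPhi h / h ^ 2 := by
  refine ⟨24, by norm_num, 1, fun h hh => ?_⟩
  have hpos : 0 < h := by linarith
  have hsubst : ∫ y in Set.Iic h, stdCdf y ^ 2 * stdPhi (2 * h - y)
      = stdPhi h * ∫ t in Ioi (0 : ℝ), exp (-h * t) * (stdCdf (h - t) ^ 2 * exp (-t ^ 2 / 2)) := by
    rw [setIntegral_Iic_eq_setIntegral_Ioi_zero, ← integral_const_mul]
    congr 1 with t
    rw [show 2 * h - (h - t) = h + t by ring, stdPhi_add]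
    ring
  have hphi : 0 < stdPhi h := stdPhi_eq_gaussianPDFReal ▸ gaussianPDFReal_pos _ _ _ one_ne_zero
  calc |(∫ y in Set.Iic h, stdCdf y ^ 2 * stdPhi (2 * h - y)) - stdPhi h / h|
      = stdPhi h * |(∫ t in Ioi (0 : ℝ), exp (-h * t) * (stdCdf (h - t) ^ 2 * exp (-t ^ 2 / 2)))
          - h⁻¹| := by
        rw [hsubst, div_eq_mul_inv, ← mul_sub, abs_mul, abs_of_pos hphi]
    _ ≤ stdPhi h * (24 / h ^ 3) := by
        gcongr; exact abs_setIntegral_exp_neg_mul_mul_stdCdf_sq_sub_inv_le hpos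
    _ ≤ stdPhi h * (24 / h ^ 2) := by gcongr; norm_num
    _ = 24 * stdPhi h / h ^ 2 := by ring
end

section
/- Fix a > 0, set α = (1 + a + a²)/(2 + 2a + a²), and define ξ₂(t) = (1 + a + a²)^{−1/2} · [ (1+a)·W(t + 2α) − a·W(t + α) − W(t) ] for t ≥ 0, where W is a standard Brownian motion. Then for all t, t' ≥ 0: E[ξ₂(t)] = 0, E[ξ₂(t)²] = 1, and E[ξ₂(t)ξ₂(t')] = ρ₂(t − t'), where ρ₂(t) = 1 − |t| for 0 ≤ |t| ≤ α, ρ₂(t) = (1+a)(2α − |t|)/(1 + a + a²) for α ≤ |t| ≤ 2α, and ρ₂(t) = 0 for |t| ≥ 2α. -/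
/-! `ξ₂(t) = c⁻¹ ∑ bᵢ W(t + τᵢ)` with `b = (1 + a, -a, -1)`, `τ = (2α, α, 0)` and
`c = √(1 + a + a²)`, so by bilinearity its mean vanishes and
`c² E[ξ₂(t) ξ₂(t')] = ∑ᵢⱼ bᵢ bⱼ min(t + τᵢ, t' + τⱼ)`. For `t' ≤ t` every minimum is resolved by
comparing `t - t'` with `α` and `2α`, and the sum is piecewise linear in `t - t'`. On `[0, α]` it
equals `(2 + 2a + a²) α - (1 + a + a²)(t - t')`, and the choice of `α` makes this
`c² (1 - (t - t'))`, so that the variance is `1`. -/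

open MeasureTheory ProbabilityTheory Real Set Filter

/-- `W` is a standard Brownian motion (Wiener process) on the probability space `(Ω, μ)`:
a Gaussian process with `W(0) = 0`, mean zero and covariance `E[W(s)W(t)] = min s t`
for `s, t ≥ 0`. -/
def IsStdBM {Ω : Type*} [MeasurableSpace Ω] (μ : Measure Ω) (W : ℝ → Ω → ℝ) : Prop :=
  IsProbabilityMeasure μ ∧
  (∀ t, Measurable (W t)) ∧
  (∀ ω, W 0 ω = 0) ∧
  (∀ (n : ℕ) (t c : Fin n → ℝ), ∃ v : NNReal,
      Measure.map (fun ω => ∑ i, c i * W (t i) ω) μ = gaussianReal 0 v) ∧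
  (∀ t, 0 ≤ t → ∫ ω, W t ω ∂μ = 0) ∧
  (∀ s t, 0 ≤ s → 0 ≤ t → ∫ ω, W s ω * W t ω ∂μ = min s t)

/-- The correlation function `ρ₂` of the process `ξ₂` built from a standard Brownian
motion with parameter `a > 0` and `α = (1 + a + a²)/(2 + 2a + a²)`. -/
noncomputable def rho2 (a t : ℝ) : ℝ :=
  if |t| ≤ (1 + a + a ^ 2) / (2 + 2 * a + a ^ 2) then 1 - |t|
  else if |t| ≤ 2 * ((1 + a + a ^ 2) / (2 + 2 * a + a ^ 2)) then
    (1 + a) * (2 * ((1 + a + a ^ 2) / (2 + 2 * a + a ^ 2)) - |t|) / (1 + a + a ^ 2)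
  else 0

lemma integral_sum_mul_sum {Ω ι κ : Type*} [MeasurableSpace Ω] {μ : Measure Ω}
    [Fintype ι] [Fintype κ]
    {X : ι → Ω → ℝ} {Y : κ → Ω → ℝ} (hX : ∀ i, MemLp (X i) 2 μ) (hY : ∀ j, MemLp (Y j) 2 μ)
    (b : ι → ℝ) (c : κ → ℝ) :
    ∫ ω, (∑ i, b i * X i ω) * (∑ j, c j * Y j ω) ∂μ
      = ∑ i, ∑ j, b i * c j * ∫ ω, X i ω * Y j ω ∂μ := by
  have hXY : ∀ i j, Integrable (fun ω => b i * c j * (X i ω * Y j ω)) μ :=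
    fun i j => ((hX i).integrable_mul (hY j)).const_mul _
  have hexpand : ∀ ω, (∑ i, b i * X i ω) * (∑ j, c j * Y j ω)
      = ∑ i, ∑ j, b i * c j * (X i ω * Y j ω) := fun ω => by
    rw [Finset.sum_mul_sum]
    exact Finset.sum_congr rfl fun i _ => Finset.sum_congr rfl fun j _ => by ring
  simp_rw [hexpand]
  rw [integral_finsetSum _ fun i _ => integrable_finsetSum _ fun j _ => hXY i j]
  refine Finset.sum_congr rfl fun i _ => ?_
  rw [integral_finsetSum _ fun j _ => hXY i j]
  simp_rw [integral_const_mul]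

namespace IsStdBM

variable {Ω : Type*} [MeasurableSpace Ω] {μ : Measure Ω} {W : ℝ → Ω → ℝ}

lemma integral_eq_zero (hW : IsStdBM μ W) {t : ℝ} (ht : 0 ≤ t) : ∫ ω, W t ω ∂μ = 0 :=
  hW.2.2.2.2.1 t ht

lemma integral_mul_eq_min (hW : IsStdBM μ W) {s t : ℝ} (hs : 0 ≤ s) (ht : 0 ≤ t) :
    ∫ ω, W s ω * W t ω ∂μ = min s t :=
  hW.2.2.2.2.2 s t hs ht

lemma memLp_two (hW : IsStdBM μ W) (s : ℝ) : MemLp (W s) 2 μ := by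
  obtain ⟨-, hmeas, -, hgauss, -, -⟩ := hW
  obtain ⟨v, hv⟩ := hgauss 1 ![s] ![1]
  simp only [Finset.univ_unique, Fin.default_eq_zero, Fin.isValue, Matrix.cons_val_fin_one,
    one_mul, Finset.sum_singleton] at hv
  have hid : MemLp id 2 (μ.map (W s)) := hv ▸ memLp_id_gaussianReal 2
  exact (memLp_map_measure_iff aestronglyMeasurable_id (hmeas s).aemeasurable).mp hid

lemma integral_sum_eq_zero (hW : IsStdBM μ W) {ι : Type*} [Fintype ι] (b s : ι → ℝ)
    (hs : ∀ i, 0 ≤ s i) :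
    ∫ ω, ∑ i, b i * W (s i) ω ∂μ = 0 := by
  have := hW.1
  rw [integral_finsetSum _ fun i _ => ((hW.memLp_two (s i)).integrable one_le_two).const_mul _]
  simp [integral_const_mul, hW.integral_eq_zero (hs _)]

lemma integral_sum_mul_sum (hW : IsStdBM μ W) {ι κ : Type*} [Fintype ι] [Fintype κ]
    (b s : ι → ℝ) (c u : κ → ℝ) (hs : ∀ i, 0 ≤ s i) (hu : ∀ j, 0 ≤ u j) :
    ∫ ω, (∑ i, b i * W (s i) ω) * (∑ j, c j * W (u j) ω) ∂μ
      = ∑ i, ∑ j, b i * c j * min (s i) (u j) := by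
  rw [_root_.integral_sum_mul_sum (fun i => hW.memLp_two (s i)) (fun j => hW.memLp_two (u j))]
  simp_rw [hW.integral_mul_eq_min (hs _) (hu _)]

end IsStdBM

noncomputable def xi2Lag (a : ℝ) : ℝ := (1 + a + a ^ 2) / (2 + 2 * a + a ^ 2)

def xi2Coeff (a : ℝ) : Fin 3 → ℝ := ![1 + a, -a, -1]

noncomputable def xi2Shift (a : ℝ) : Fin 3 → ℝ := ![2 * xi2Lag a, xi2Lag a, 0]

lemma one_add_add_sq_pos (a : ℝ) : 0 < 1 + a + a ^ 2 := by
  nlinarith [sq_nonneg (a + 1 / 2)]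

lemma two_add_two_mul_add_sq_pos (a : ℝ) : 0 < 2 + 2 * a + a ^ 2 := by
  nlinarith [sq_nonneg (a + 1)]

lemma xi2Lag_pos (a : ℝ) : 0 < xi2Lag a :=
  div_pos (one_add_add_sq_pos a) (two_add_two_mul_add_sq_pos a)

lemma xi2Lag_mul (a : ℝ) : xi2Lag a * (2 + 2 * a + a ^ 2) = 1 + a + a ^ 2 :=
  div_mul_cancel₀ _ (two_add_two_mul_add_sq_pos a).ne'

lemma xi2Shift_nonneg (a : ℝ) (i : Fin 3) : 0 ≤ xi2Shift a i := by
  have := (xi2Lag_pos a).le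
  fin_cases i <;> simp [xi2Shift, this]

lemma rho2_eq (a t : ℝ) : rho2 a t =
    if |t| ≤ xi2Lag a then 1 - |t|
    else if |t| ≤ 2 * xi2Lag a then (1 + a) * (2 * xi2Lag a - |t|) / (1 + a + a ^ 2)
    else 0 := rfl

lemma rho2_zero (a : ℝ) : rho2 a 0 = 1 := by
  rw [rho2_eq, abs_zero, if_pos (xi2Lag_pos a).le, sub_zero]

lemma rho2_neg (a t : ℝ) : rho2 a (-t) = rho2 a t := by
  rw [rho2_eq, rho2_eq, abs_neg]

lemma sum_xi2Coeff_mul_min_of_le {a t t' : ℝ} (h : t' ≤ t) :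
    ∑ i, ∑ j, xi2Coeff a i * xi2Coeff a j * min (t + xi2Shift a i) (t' + xi2Shift a j)
      = (1 + a + a ^ 2) * rho2 a (t - t') := by
  have hA := xi2Lag_pos a
  simp only [Fin.sum_univ_three, xi2Coeff, xi2Shift, Matrix.cons_val_zero, Matrix.cons_val_one,
    Matrix.cons_val_two, Matrix.head_cons, Matrix.tail_cons, add_zero]
  rw [rho2_eq, abs_of_nonneg (sub_nonneg.2 h),
    min_eq_right (by linarith : t' + 2 * xi2Lag a ≤ t + 2 * xi2Lag a),
    min_eq_right (by linarith : t' + xi2Lag a ≤ t + 2 * xi2Lag a),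
    min_eq_right (by linarith : t' ≤ t + 2 * xi2Lag a),
    min_eq_right (by linarith : t' + xi2Lag a ≤ t + xi2Lag a),
    min_eq_right (by linarith : t' ≤ t + xi2Lag a), min_eq_right h]
  rcases le_or_gt (t - t') (xi2Lag a) with h₁ | h₁
  · rw [if_pos h₁, min_eq_left (by linarith : t + xi2Lag a ≤ t' + 2 * xi2Lag a),
      min_eq_left (by linarith : t ≤ t' + 2 * xi2Lag a),
      min_eq_left (by linarith : t ≤ t' + xi2Lag a)]
    linear_combination xi2Lag_mul a
  rw [if_neg h₁.not_ge, min_eq_right (by linarith : t' + 2 * xi2Lag a ≤ t + xi2Lag a),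
    min_eq_right (by linarith : t' + xi2Lag a ≤ t)]
  rcases le_or_gt (t - t') (2 * xi2Lag a) with h₂ | h₂
  · rw [if_pos h₂, min_eq_left (by linarith : t ≤ t' + 2 * xi2Lag a),
      mul_div_cancel₀ _ (one_add_add_sq_pos a).ne']
    ring
  · rw [if_neg h₂.not_ge, min_eq_right (by linarith : t' + 2 * xi2Lag a ≤ t)]
    ring

lemma sum_xi2Coeff_mul_min (a t t' : ℝ) :
    ∑ i, ∑ j, xi2Coeff a i * xi2Coeff a j * min (t + xi2Shift a i) (t' + xi2Shift a j)
      = (1 + a + a ^ 2) * rho2 a (t - t') := by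
  rcases le_total t' t with h | h
  · exact sum_xi2Coeff_mul_min_of_le h
  rw [← rho2_neg, neg_sub, ← sum_xi2Coeff_mul_min_of_le h, Finset.sum_comm]
  refine Finset.sum_congr rfl fun i _ => Finset.sum_congr rfl fun j _ => ?_
  rw [min_comm, mul_comm (xi2Coeff a j)]

theorem xi2_moments_general {Ω : Type*} [MeasurableSpace Ω] (μ : Measure Ω)
    (W : ℝ → Ω → ℝ) (hW : IsStdBM μ W) (a : ℝ) :
    let α : ℝ := (1 + a + a ^ 2) / (2 + 2 * a + a ^ 2)
    let ξ : ℝ → Ω → ℝ := fun t ω =>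
      (Real.sqrt (1 + a + a ^ 2))⁻¹ *
        ((1 + a) * W (t + 2 * α) ω - a * W (t + α) ω - W t ω)
    ∀ t t' : ℝ, 0 ≤ t → 0 ≤ t' →
      (∫ ω, ξ t ω ∂μ) = 0 ∧ (∫ ω, (ξ t ω) ^ 2 ∂μ) = 1 ∧
        (∫ ω, ξ t ω * ξ t' ω ∂μ) = rho2 a (t - t') := by
  intro α ξ t t' ht ht'
  set c := Real.sqrt (1 + a + a ^ 2)
  have hξ : ∀ s ω, ξ s ω = c⁻¹ * ∑ i, xi2Coeff a i * W (s + xi2Shift a i) ω := by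
    intro s ω
    simp only [ξ, α, c, xi2Coeff, xi2Shift, xi2Lag, Fin.sum_univ_three, Matrix.cons_val_zero,
      Matrix.cons_val_one, Matrix.cons_val_two, Matrix.head_cons, Matrix.tail_cons, add_zero]
    ring
  have hshift : ∀ s, 0 ≤ s → ∀ i, 0 ≤ s + xi2Shift a i :=
    fun s hs i => add_nonneg hs (xi2Shift_nonneg a i)
  have hcov : ∀ s s', 0 ≤ s → 0 ≤ s' → ∫ ω, ξ s ω * ξ s' ω ∂μ = rho2 a (s - s') := by
    intro s s' hs hs'
    have hc : c⁻¹ * c⁻¹ * (1 + a + a ^ 2) = 1 := by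
      rw [← mul_inv, Real.mul_self_sqrt (one_add_add_sq_pos a).le,
        inv_mul_cancel₀ (one_add_add_sq_pos a).ne']
    simp_rw [hξ, mul_mul_mul_comm c⁻¹, integral_const_mul]
    rw [hW.integral_sum_mul_sum _ _ _ _ (hshift s hs) (hshift s' hs'), sum_xi2Coeff_mul_min,
      ← mul_assoc, hc, one_mul]
  refine ⟨?_, ?_, hcov t t' ht ht'⟩
  · simp_rw [hξ, integral_const_mul, hW.integral_sum_eq_zero _ _ (hshift t ht), mul_zero]
  · simpa [sq, rho2_zero] using hcov t t ht ht

/-- The process `ξ₂(t) = (1+a+a²)^{-1/2} ((1+a)W(t+2α) - aW(t+α) - W(t))` has mean `0`,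
variance `1` and correlation function `ρ₂`. -/
theorem xi2_moments {Ω : Type*} [MeasurableSpace Ω] (μ : Measure Ω)
    (W : ℝ → Ω → ℝ) (hW : IsStdBM μ W) (a : ℝ) (ha : 0 < a) :
    let α : ℝ := (1 + a + a ^ 2) / (2 + 2 * a + a ^ 2)
    let ξ : ℝ → Ω → ℝ := fun t ω =>
      (Real.sqrt (1 + a + a ^ 2))⁻¹ *
        ((1 + a) * W (t + 2 * α) ω - a * W (t + α) ω - W t ω)
    ∀ t t' : ℝ, 0 ≤ t → 0 ≤ t' →
      (∫ ω, ξ t ω ∂μ) = 0 ∧ (∫ ω, (ξ t ω) ^ 2 ∂μ) = 1 ∧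
        (∫ ω, ξ t ω * ξ t' ω ∂μ) = rho2 a (t - t') :=
  xi2_moments_general μ W hW a
end
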